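/- Let r > 0, D > 0, η > 0, δ ∈ [0,1), γ > 1. Suppose δ ≤ sqrt(1 - 4/(γ^{2/η} + 3)). If r ≤ (-Dδ - sqrt((γ^{2/η} - 1)·D²·(1 - δ²))) / (2·(1 - γ^{2/η} + γ^{2/η}·δ²)), then (sqrt(r² + D²/4 + δ·r·D))^η / (r·sqrt(1-δ²))^η ≥ γ. -/
import Mathlib


open Real

set_option maxHeartbeats 1000000 in
/-- near-field XPD ratio bound for small direction cosine δ. -/
theorem stmt1 (r D η δ γ : ℝ) (hr : 0 < r) (hD : 0 < D) (hη : 0 < η)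
    (hδ0 : 0 ≤ δ) (hδ1 : δ < 1) (hγ : 1 < γ)
    (hδ : δ ≤ Real.sqrt (1 - 4 / (γ ^ (2 / η) + 3)))
    (hr_le : r ≤ (-(D * δ) - Real.sqrt ((γ ^ (2 / η) - 1) * D ^ 2 * (1 - δ ^ 2))) /
        (2 * (1 - γ ^ (2 / η) + γ ^ (2 / η) * δ ^ 2))) :
    γ ≤ (Real.sqrt (r ^ 2 + D ^ 2 / 4 + δ * r * D)) ^ η / (r * Real.sqrt (1 - δ ^ 2)) ^ η := by
  have hγ0 : (0:ℝ) < γ := lt_trans one_pos hγ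
  have hg1 : 1 < γ ^ (2 / η) :=
    (Real.one_lt_rpow_iff_of_pos hγ0).mpr (Or.inl ⟨hγ, by positivity⟩)
  have hgsq : γ ^ (1 / η) * γ ^ (1 / η) = γ ^ (2 / η) := by
    rw [← Real.rpow_add hγ0]; congr 1; ring
  obtain ⟨g, hg_def⟩ : ∃ g, γ ^ (2 / η) = g := ⟨_, rfl⟩
  rw [hg_def] at hδ hr_le hg1 hgsq
  have hg0 : 0 < g := lt_trans one_pos hg1
  have h1δ2 : 0 < 1 - δ ^ 2 := by nlinarith
  have ht : (0:ℝ) ≤ 1 - 4 / (g + 3) := by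
    have : 4 / (g + 3) < 1 := by rw [div_lt_one (by linarith)]; linarith
    linarith
  have hδ2 : δ ^ 2 ≤ 1 - 4 / (g + 3) := by
    have h := pow_le_pow_left₀ hδ0 hδ 2
    rwa [Real.sq_sqrt ht] at h
  obtain ⟨a, ha_def⟩ : ∃ a, (1:ℝ) - g + g * δ ^ 2 = a := ⟨_, rfl⟩
  rw [ha_def] at hr_le
  have ha : a < 0 := by
    have h4 : 4 / (g + 3) ≤ 1 - δ ^ 2 := by linarith
    have h4' : 4 ≤ (1 - δ ^ 2) * (g + 3) := by
      rw [div_le_iff₀ (by linarith)] at h4; linarith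
    nlinarith
  obtain ⟨s, hs_def⟩ : ∃ s, Real.sqrt ((g - 1) * D ^ 2 * (1 - δ ^ 2)) = s := ⟨_, rfl⟩
  rw [hs_def] at hr_le
  have hs0 : 0 ≤ s := hs_def ▸ Real.sqrt_nonneg _
  have hs2 : s ^ 2 = (g - 1) * D ^ 2 * (1 - δ ^ 2) := by
    rw [← hs_def]
    exact Real.sq_sqrt (mul_nonneg (mul_nonneg (by linarith) (sq_nonneg D)) h1δ2.le)
  have hs2' : s ^ 2 = D ^ 2 * (δ ^ 2 - a) := by rw [hs2, ← ha_def]; ring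
  have hsD : D * δ ≤ s := by nlinarith [hs0, hD.le]
  have h1 : -(D * δ) - s ≤ 2 * a * r := by
    have hden : 2 * a < 0 := by linarith
    rw [le_div_iff_of_neg hden] at hr_le
    linarith [hr_le]
  have h2 : 2 * a * r + D * δ ≤ s := by
    nlinarith [mul_pos (neg_pos.mpr ha) hr]
  have hprod : 0 ≤ (s - (2 * a * r + D * δ)) * (s + (2 * a * r + D * δ)) := by
    apply mul_nonneg <;> linarith
  have hq : 0 ≤ a * r ^ 2 + δ * r * D + D ^ 2 / 4 := by
    by_contra hq'
    push_neg at hq'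
    nlinarith [hprod, hs2',
      mul_pos (neg_pos.mpr ha) (by linarith : (0:ℝ) < -(a * r ^ 2 + δ * r * D + D ^ 2 / 4))]
  have hkey : g * (r ^ 2 * (1 - δ ^ 2)) ≤ r ^ 2 + D ^ 2 / 4 + δ * r * D := by
    have hga : g * (r ^ 2 * (1 - δ ^ 2)) = (1 - a) * r ^ 2 := by rw [← ha_def]; ring
    rw [hga]; nlinarith [hq]
  have hrs : 0 < r * Real.sqrt (1 - δ ^ 2) := by positivity
  have hsqrt : γ ^ (1 / η) * (r * Real.sqrt (1 - δ ^ 2)) ≤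
      Real.sqrt (r ^ 2 + D ^ 2 / 4 + δ * r * D) := by
    have heq : γ ^ (1 / η) * (r * Real.sqrt (1 - δ ^ 2)) =
        Real.sqrt (g * (r ^ 2 * (1 - δ ^ 2))) := by
      rw [Real.sqrt_mul hg0.le, Real.sqrt_mul (by positivity), Real.sqrt_sq hr.le]
      congr 1
      rw [show g = γ ^ (1/η) * γ ^ (1/η) from hgsq.symm,
        Real.sqrt_mul_self (Real.rpow_nonneg hγ0.le _)]
    rw [heq]
    exact Real.sqrt_le_sqrt hkey
  have hγη : 0 < γ ^ (1 / η) := Real.rpow_pos_of_pos hγ0 _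
  have hfinal : γ * (r * Real.sqrt (1 - δ ^ 2)) ^ η ≤
      (Real.sqrt (r ^ 2 + D ^ 2 / 4 + δ * r * D)) ^ η := by
    calc γ * (r * Real.sqrt (1 - δ ^ 2)) ^ η
        = (γ ^ (1 / η) * (r * Real.sqrt (1 - δ ^ 2))) ^ η := by
          rw [Real.mul_rpow hγη.le hrs.le, ← Real.rpow_mul hγ0.le,
            one_div_mul_cancel hη.ne', Real.rpow_one]
      _ ≤ _ := Real.rpow_le_rpow (by positivity) hsqrt hη.le
  rw [le_div_iff₀ (Real.rpow_pos_of_pos hrs η)]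
  exact hfinal
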